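/- Let n ≥ 2 and let c, s > 0 with c² + s² = 1. Let K_n ∈ ℝ^{n×n} be the Kahan matrix, the upper triangular matrix with (K_n)_{ii} = c^{i−1} for 1 ≤ i ≤ n, (K_n)_{ij} = −s·c^{i−1} for j > i, and (K_n)_{ij} = 0 for j < i. Then the n×(n−1) submatrix of the last n−1 columns of K_n has volume at least s·(1+s)^{n−2} times the volume of the n×(n−1) submatrix of the first n−1 columns: vol(K_n(:, 2:n)) ≥ s·(1+s)^{n−2}·vol(K_n(:, 1:n−1)). Consequently, for A = K_nᵀ·K_n, the trailing principal (n−1)×(n−1) submatrix A(2:n, 2:n) satisfies vol(A(2:n, 2:n)) ≥ s²·(1+s)^{2(n−2)}·vol(A(1:n−1, 1:n−1)), so the leading (n−1)×(n−1) principal submatrix of A (which is the pivot selected by Gaussian elimination with complete pivoting in exact arithmetic) fails to be a γ-local maximum volume submatrix for every γ < s²·(1+s)^{2(n−2)}. -/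

import Mathlib

open Matrix

/-- The spectral norm (`‖·‖₂`, largest singular value) of a real matrix. -/
noncomputable def specNorm {m n : Type*} [Fintype m] [Fintype n] [DecidableEq n]
    (A : Matrix m n ℝ) : ℝ :=
  ‖LinearMap.toContinuousLinearMap (Matrix.toEuclideanLin A)‖

/-- `sval A j` is the `j`-th largest singular value of `A` (1-indexed), characterized as the
distance, in the spectral norm, from `A` to the set of matrices of rank `< j`. -/
noncomputable def sval {m n : Type*} [Fintype m] [Fintype n] [DecidableEq n]
    (A : Matrix m n ℝ) (j : ℕ) : ℝ :=
  sInf {x : ℝ | ∃ B : Matrix m n ℝ, B.rank < j ∧ x = specNorm (A - B)}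

/-- The volume of a matrix: the product of its singular values. -/
noncomputable def vol {m n : Type*} [Fintype m] [Fintype n] [DecidableEq n]
    (A : Matrix m n ℝ) : ℝ :=
  ∏ j ∈ Finset.Icc 1 (min (Fintype.card m) (Fintype.card n)), sval A j

/-- `DiffOne b r` : `r` is an injective selection of indices whose image (index set)
differs from the index set selected by `b` in at most one element. -/
def DiffOne {ι α : Type*} [Fintype ι] [DecidableEq α] (b r : ι → α) : Prop :=
  Function.Injective r ∧ (Finset.univ.image r \ Finset.univ.image b).card ≤ 1

/-- The n×n Kahan matrix (0-indexed): diagonal entries c^i, entries -s·c^i above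
the diagonal, and 0 below the diagonal. -/
noncomputable def kahan (n : ℕ) (c s : ℝ) : Matrix (Fin n) (Fin n) ℝ :=
  Matrix.of fun i j => if i = j then c ^ (i : ℕ) else if i < j then -s * c ^ (i : ℕ) else 0

/-!
By the spectral-norm Eckart–Young theorem, `sval B (k + 1)` is the square root of the `k`-th
largest eigenvalue of `BᵀB`. Hence a tall matrix has `vol B ^ 2 = det (BᵀB)`, a square one has
`vol B = |det B|`, and `vol (BᵀB) = vol B ^ 2`.

The first `n - 1` columns of `K_n` have a zero last row, so their volume is `|det K_{n-1}|`.
Deleting the last row of the last `n - 1` columns can only decrease the singular values, and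
leaves `diag (c ^ i) * H` with `H` upper Hessenberg; differencing consecutive columns turns `H`
into a lower bidiagonal matrix with diagonal `-s, -(1 + s), …, -(1 + s)`. So the last `n - 1`
columns have volume at least `s (1 + s) ^ (n - 2) |det K_{n-1}|`. Squaring gives the bound for the
principal submatrices of `KᵀK`, and the trailing one differs from the leading one in exactly one
row and one column.
-/

open Module InnerProductSpace

theorem OrthonormalBasis.norm_sq_eq_sum_repr {ι E : Type*} [Fintype ι] [NormedAddCommGroup E]
    [InnerProductSpace ℝ E] (b : OrthonormalBasis ι ℝ E) (x : E) :
    ‖x‖ ^ 2 = ∑ i, b.repr x i ^ 2 := by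
  rw [← b.repr.norm_map, EuclideanSpace.norm_sq_eq]
  simp [sq_abs]

section AntitoneWeights

variable {ι : Type*} [Fintype ι] [LinearOrder ι] {g c : ι → ℝ}

theorem sum_mul_sq_le_of_forall_lt_eq_zero (hg : Antitone g) {k : ι} (hc : ∀ i < k, c i = 0) :
    ∑ i, g i * c i ^ 2 ≤ g k * ∑ i, c i ^ 2 := by
  rw [Finset.mul_sum]
  refine Finset.sum_le_sum fun i _ => ?_
  rcases lt_or_ge i k with hi | hi
  · simp [hc i hi]
  · exact mul_le_mul_of_nonneg_right (hg hi) (sq_nonneg _)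

theorem mul_sum_sq_le_of_forall_gt_eq_zero (hg : Antitone g) {k : ι}
    (hc : ∀ i, k < i → c i = 0) : g k * ∑ i, c i ^ 2 ≤ ∑ i, g i * c i ^ 2 := by
  rw [Finset.mul_sum]
  refine Finset.sum_le_sum fun i _ => ?_
  rcases le_or_gt i k with hi | hi
  · exact mul_le_mul_of_nonneg_right (hg hi) (sq_nonneg _)
  · simp [hc i hi]

end AntitoneWeights

namespace LinearMap

variable {E F : Type*} [NormedAddCommGroup E] [InnerProductSpace ℝ E] [FiniteDimensional ℝ E]
  [NormedAddCommGroup F] [InnerProductSpace ℝ F] [FiniteDimensional ℝ F] (T : E →ₗ[ℝ] F)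

noncomputable def rightSingularBasis : OrthonormalBasis (Fin (finrank ℝ E)) ℝ E :=
  T.isSymmetric_adjoint_comp_self.eigenvectorBasis rfl

theorem rightSingularBasis_repr_adjoint_comp_self (x : E) (i : Fin (finrank ℝ E)) :
    T.rightSingularBasis.repr ((adjoint T ∘ₗ T) x) i =
      T.singularValues i ^ 2 * T.rightSingularBasis.repr x i := by
  rw [T.sq_singularValues_fin rfl]
  exact T.isSymmetric_adjoint_comp_self.eigenvectorBasis_apply_self_apply rfl x i

theorem norm_sq_apply_eq_sum (x : E) :
    ‖T x‖ ^ 2 = ∑ i : Fin (finrank ℝ E),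
      T.singularValues i ^ 2 * T.rightSingularBasis.repr x i ^ 2 := by
  calc ‖T x‖ ^ 2 = ⟪x, (adjoint T ∘ₗ T) x⟫_ℝ := by
          rw [comp_apply, adjoint_inner_right, real_inner_self_eq_norm_sq]
    _ = ∑ i, T.rightSingularBasis.repr x i *
          T.rightSingularBasis.repr ((adjoint T ∘ₗ T) x) i := by
          rw [← T.rightSingularBasis.repr.inner_map_map, PiLp.inner_apply]
          simp only [RCLike.inner_apply, conj_trivial, mul_comm]
    _ = _ := by
          simp only [rightSingularBasis_repr_adjoint_comp_self]
          exact Finset.sum_congr rfl fun i _ => by ring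

theorem antitone_sq_singularValues : Antitone fun i : ℕ => T.singularValues i ^ 2 :=
  fun _ _ hij => pow_le_pow_left₀ (T.singularValues_nonneg _) (T.singularValues_antitone hij) 2

theorem exists_finrank_range_le_norm_sub_apply_le (k : ℕ) :
    ∃ B : E →ₗ[ℝ] F, finrank ℝ (range B) ≤ k ∧
      ∀ x, ‖(T - B) x‖ ≤ T.singularValues k * ‖x‖ := by
  by_cases hk : finrank ℝ E ≤ k
  · refine ⟨T, T.finrank_range_le.trans hk, fun x => ?_⟩
    simpa using mul_nonneg (T.singularValues_nonneg k) (norm_nonneg x)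
  push Not at hk
  set b := T.rightSingularBasis
  set V := Submodule.span ℝ (Set.range (b ∘ Fin.castLE hk.le))
  refine ⟨T ∘ₗ V.starProjection.toLinearMap, ?_, fun x => ?_⟩
  · calc finrank ℝ (range (T ∘ₗ V.starProjection.toLinearMap))
          ≤ finrank ℝ (range V.starProjection.toLinearMap) := by
            rw [range_comp]; exact Submodule.finrank_map_le _ _
      _ ≤ k := by
            rw [Submodule.range_starProjection]
            exact (finrank_range_le_card (R := ℝ) _).trans_eq (Fintype.card_fin k)
  set y := x - V.starProjection x
  have hy : ∀ i < (⟨k, hk⟩ : Fin (finrank ℝ E)), b.repr y i = 0 := fun i hi => by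
    rw [b.repr_apply_apply]
    exact Submodule.inner_right_of_mem_orthogonal
      (Submodule.subset_span (Set.mem_range.2 ⟨⟨i, hi⟩, rfl⟩))
      (V.sub_starProjection_mem_orthogonal x)
  have hyx : ‖y‖ ≤ ‖x‖ := by
    rw [show y = Vᗮ.starProjection x from (V.starProjection_orthogonal_val x).symm]
    exact Vᗮ.norm_starProjection_apply_le x
  have hTy : ‖T y‖ ^ 2 ≤ (T.singularValues k * ‖x‖) ^ 2 := calc
    ‖T y‖ ^ 2 = ∑ i : Fin _, T.singularValues i ^ 2 * b.repr y i ^ 2 := T.norm_sq_apply_eq_sum y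
    _ ≤ T.singularValues k ^ 2 * ∑ i, b.repr y i ^ 2 :=
        sum_mul_sq_le_of_forall_lt_eq_zero
          (T.antitone_sq_singularValues.comp_monotone Fin.val_strictMono.monotone) hy
    _ = T.singularValues k ^ 2 * ‖y‖ ^ 2 := by rw [b.norm_sq_eq_sum_repr]
    _ ≤ (T.singularValues k * ‖x‖) ^ 2 := by rw [mul_pow]; gcongr
  have hTBx : (T - T ∘ₗ V.starProjection.toLinearMap) x = T y := by simp [y]
  rw [hTBx]
  exact (pow_le_pow_iff_left₀ (norm_nonneg _)
    (mul_nonneg (T.singularValues_nonneg k) (norm_nonneg x)) two_ne_zero).1 hTy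

theorem exists_ne_zero_singularValues_mul_norm_le (B : E →ₗ[ℝ] F) {k : ℕ}
    (hB : finrank ℝ (range B) ≤ k) (hk : k < finrank ℝ E) :
    ∃ x ≠ 0, T.singularValues k * ‖x‖ ≤ ‖(T - B) x‖ := by
  set b := T.rightSingularBasis
  set S := Set.range (Fin.castLE hk : Fin (k + 1) → Fin (finrank ℝ E))
  have hW : finrank ℝ (Submodule.span ℝ (b '' S)) = k + 1 := by
    rw [show b '' S = Set.range (b ∘ Fin.castLE hk) from (Set.range_comp _ _).symm,
      finrank_span_eq_card
      (b.orthonormal.linearIndependent.comp _ (Fin.castLE_injective hk)), Fintype.card_fin]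
  -- the span of the top `k + 1` right singular vectors meets `ker B` nontrivially
  obtain ⟨w, hw, hw0⟩ := Submodule.exists_mem_ne_zero_of_ne_bot
    (ker_ne_bot_of_finrank_lt
      (f := B.rangeRestrict ∘ₗ (Submodule.span ℝ (b '' S)).subtype) (by omega))
  set x : E := ↑w
  have hBx : B x = 0 := by simpa [x, Subtype.ext_iff] using hw
  have hx : ∀ i, (⟨k, hk⟩ : Fin (finrank ℝ E)) < i → b.repr x i = 0 := fun i hi => by
    rw [← b.coe_toBasis_repr_apply, ← Finsupp.notMem_support_iff]
    refine fun hmem => ?_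
    obtain ⟨j, rfl⟩ := b.toBasis.repr_support_subset_of_mem_span S w.2 hmem
    exact absurd hi (not_lt.2 (Nat.le_of_lt_succ j.isLt))
  refine ⟨x, by simpa [x] using hw0, ?_⟩
  have hTx : (T.singularValues k * ‖x‖) ^ 2 ≤ ‖T x‖ ^ 2 := calc
    (T.singularValues k * ‖x‖) ^ 2 = T.singularValues k ^ 2 * ∑ i, b.repr x i ^ 2 := by
        rw [mul_pow, b.norm_sq_eq_sum_repr]
    _ ≤ ∑ i : Fin _, T.singularValues i ^ 2 * b.repr x i ^ 2 :=
        mul_sum_sq_le_of_forall_gt_eq_zero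
          (T.antitone_sq_singularValues.comp_monotone Fin.val_strictMono.monotone) hx
    _ = ‖T x‖ ^ 2 := (T.norm_sq_apply_eq_sum x).symm
  rw [sub_apply, hBx, sub_zero]
  exact (pow_le_pow_iff_left₀ (mul_nonneg (T.singularValues_nonneg k) (norm_nonneg x))
    (norm_nonneg _) two_ne_zero).1 hTx

end LinearMap

section Volume

variable {m n : Type*} [Fintype m] [Fintype n] [DecidableEq n]

theorem specNorm_nonneg (A : Matrix m n ℝ) : 0 ≤ specNorm A := norm_nonneg _

theorem norm_toEuclideanLin_apply_le (A : Matrix m n ℝ) (x : EuclideanSpace ℝ n) :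
    ‖toEuclideanLin A x‖ ≤ specNorm A * ‖x‖ :=
  (LinearMap.toContinuousLinearMap (toEuclideanLin A)).le_opNorm x

theorem specNorm_le_of_forall_norm_apply_le (A : Matrix m n ℝ) {C : ℝ} (hC : 0 ≤ C)
    (h : ∀ x, ‖toEuclideanLin A x‖ ≤ C * ‖x‖) : specNorm A ≤ C :=
  ContinuousLinearMap.opNorm_le_bound _ hC h

theorem rank_eq_finrank_range_toEuclideanLin (A : Matrix m n ℝ) :
    A.rank = finrank ℝ (LinearMap.range (toEuclideanLin A)) := by
  rw [toEuclideanLin, toLpLin_eq_toLin]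
  exact rank_eq_finrank_range_toLin A _ _

theorem sval_le_specNorm_sub {A B : Matrix m n ℝ} {j : ℕ} (h : B.rank < j) :
    sval A j ≤ specNorm (A - B) :=
  csInf_le ⟨0, fun _ ⟨_, _, hx⟩ => hx ▸ specNorm_nonneg _⟩ ⟨B, h, rfl⟩

theorem le_sval {A : Matrix m n ℝ} {j : ℕ} {C : ℝ} (hj : 0 < j)
    (h : ∀ B : Matrix m n ℝ, B.rank < j → C ≤ specNorm (A - B)) : C ≤ sval A j :=
  le_csInf ⟨specNorm A, 0, by simpa using hj, by simp⟩ fun _ ⟨B, hB, hx⟩ => hx ▸ h B hB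

theorem sval_nonneg (A : Matrix m n ℝ) (j : ℕ) : 0 ≤ sval A j :=
  Real.sInf_nonneg fun _ ⟨_, _, hx⟩ => hx ▸ specNorm_nonneg _

theorem vol_nonneg (A : Matrix m n ℝ) : 0 ≤ vol A :=
  Finset.prod_nonneg fun j _ => sval_nonneg A j

theorem specNorm_submatrix_le {m₂ : Type*} [Fintype m₂] (A : Matrix m n ℝ) {f : m₂ → m}
    (hf : Function.Injective f) : specNorm (A.submatrix f id) ≤ specNorm A := by
  refine specNorm_le_of_forall_norm_apply_le _ (specNorm_nonneg A) fun x =>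
    le_trans ?_ (norm_toEuclideanLin_apply_le A x)
  rw [← pow_le_pow_iff_left₀ (norm_nonneg _) (norm_nonneg _) two_ne_zero,
    EuclideanSpace.norm_sq_eq, EuclideanSpace.norm_sq_eq]
  calc ∑ i, ‖toEuclideanLin (A.submatrix f id) x i‖ ^ 2
      = ∑ j ∈ Finset.univ.map ⟨f, hf⟩, ‖toEuclideanLin A x j‖ ^ 2 := by
        rw [Finset.sum_map]; rfl
    _ ≤ ∑ j, ‖toEuclideanLin A x j‖ ^ 2 :=
        Finset.sum_le_univ_sum_of_nonneg fun _ => by positivity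

theorem sval_submatrix_le {m₂ : Type*} [Fintype m₂] (A : Matrix m n ℝ) {f : m₂ → m}
    (hf : Function.Injective f) {j : ℕ} (hj : 0 < j) :
    sval (A.submatrix f id) j ≤ sval A j :=
  le_sval hj fun B hB =>
    (sval_le_specNorm_sub ((rank_submatrix_le B f id).trans_lt hB)).trans
      (specNorm_submatrix_le (A - B) hf)

theorem vol_submatrix_le {m₂ : Type*} [Fintype m₂] (A : Matrix m n ℝ) {f : m₂ → m}
    (hf : Function.Injective f) (h : Fintype.card n ≤ Fintype.card m₂) :
    vol (A.submatrix f id) ≤ vol A := by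
  rw [vol, vol, min_eq_right h, min_eq_right (h.trans (Fintype.card_le_of_injective f hf))]
  exact Finset.prod_le_prod (fun j _ => sval_nonneg _ j)
    fun j hj => sval_submatrix_le A hf (Finset.mem_Icc.1 hj).1

theorem sval_succ_eq_singularValues (A : Matrix m n ℝ) (k : ℕ) :
    sval A (k + 1) = (toEuclideanLin A).singularValues k := by
  set T := toEuclideanLin A
  apply le_antisymm
  · obtain ⟨B, hB, hTB⟩ := T.exists_finrank_range_le_norm_sub_apply_le k
    refine (sval_le_specNorm_sub (B := toEuclideanLin.symm B) ?_).trans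
      (specNorm_le_of_forall_norm_apply_le _ (T.singularValues_nonneg k) fun x => ?_)
    · rw [rank_eq_finrank_range_toEuclideanLin, LinearEquiv.apply_symm_apply]
      omega
    · simpa [T] using hTB x
  · refine le_sval k.succ_pos fun B hB => ?_
    rw [rank_eq_finrank_range_toEuclideanLin] at hB
    by_cases hk : k < finrank ℝ (EuclideanSpace ℝ n)
    · obtain ⟨x, hx0, hx⟩ :=
        T.exists_ne_zero_singularValues_mul_norm_le (toEuclideanLin B) (Nat.lt_succ_iff.1 hB) hk
      have hAB : T.singularValues k * ‖x‖ ≤ specNorm (A - B) * ‖x‖ :=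
        hx.trans_eq (by simp [T]) |>.trans (norm_toEuclideanLin_apply_le (A - B) x)
      exact le_of_mul_le_mul_right hAB (norm_pos_iff.2 hx0)
    · rw [T.singularValues_of_finrank_le (not_lt.1 hk)]
      exact specNorm_nonneg _

theorem vol_eq_prod_singularValues (A : Matrix m n ℝ) :
    vol A = ∏ k ∈ Finset.range (min (Fintype.card m) (Fintype.card n)),
      (toEuclideanLin A).singularValues k := by
  rw [vol, ← Finset.Ico_add_one_right_eq_Icc, Finset.prod_Ico_eq_prod_range, Nat.add_sub_cancel]
  simp_rw [add_comm 1, sval_succ_eq_singularValues]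

theorem sq_vol_eq_det (A : Matrix m n ℝ) (h : Fintype.card n ≤ Fintype.card m) :
    vol A ^ 2 = (Aᵀ * A).det := by
  classical
  set T := toEuclideanLin A
  have hTT : toEuclideanLin (Aᵀ * A) = T.adjoint ∘ₗ T := by
    rw [← toEuclideanLin_conjTranspose_eq_adjoint, conjTranspose_eq_transpose_of_trivial]
    exact toLpLin_mul _ _ _ _ _
  rw [vol_eq_prod_singularValues, min_eq_right h, ← Finset.prod_pow,
    ← Fin.prod_univ_eq_prod_range (fun k => T.singularValues k ^ 2)]
  simp_rw [T.sq_singularValues_fin finrank_euclideanSpace]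
  rw [← LinearMap.det_toLin (PiLp.basisFun 2 ℝ n), ← toLpLin_eq_toLin, ← toEuclideanLin, hTT,
    T.isSymmetric_adjoint_comp_self.det_eq_prod_eigenvalues finrank_euclideanSpace]
  rfl

theorem vol_eq_abs_det (A : Matrix n n ℝ) : vol A = |A.det| := by
  rw [← Real.sqrt_sq (vol_nonneg A), sq_vol_eq_det A le_rfl, det_mul, det_transpose,
    Real.sqrt_mul_self_eq_abs]

theorem vol_transpose_mul_self (A : Matrix m n ℝ) (h : Fintype.card n ≤ Fintype.card m) :
    vol (Aᵀ * A) = vol A ^ 2 := by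
  rw [vol_eq_abs_det, ← sq_vol_eq_det A h, abs_of_nonneg (by positivity)]

theorem vol_submatrix_eq_of_forall_notMem_range {m₂ : Type*} [Fintype m₂] (A : Matrix m n ℝ)
    {f : m₂ → m} (hf : Function.Injective f) (hA : ∀ i ∉ Set.range f, A i = 0)
    (h : Fintype.card n ≤ Fintype.card m₂) : vol (A.submatrix f id) = vol A := by
  have hgram : (A.submatrix f id)ᵀ * A.submatrix f id = Aᵀ * A := by
    ext i j
    simp only [mul_apply, transpose_apply, submatrix_apply, id]
    exact Fintype.sum_of_injective f hf _ _ (fun k hk => by simp [hA k hk]) fun _ => rfl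
  refine (pow_left_inj₀ (vol_nonneg _) (vol_nonneg _) two_ne_zero).1 ?_
  rw [sq_vol_eq_det _ h, sq_vol_eq_det _ (h.trans (Fintype.card_le_of_injective f hf)), hgram]

end Volume

theorem vol_transpose_mul_self_submatrix {m n n₂ : Type*} [Fintype m] [Fintype n₂]
    [DecidableEq n₂] (A : Matrix m n ℝ) (e : n₂ → n) (h : Fintype.card n₂ ≤ Fintype.card m) :
    vol ((Aᵀ * A).submatrix e e) = vol (A.submatrix id e) ^ 2 := by
  have hgram : (Aᵀ * A).submatrix e e = (A.submatrix id e)ᵀ * A.submatrix id e := by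
    ext i j
    simp [mul_apply]
  rw [hgram, vol_transpose_mul_self _ h]

section Kahan

variable (c s : ℝ)

theorem kahan_apply_of_lt {n : ℕ} {i j : Fin n} (h : j < i) : kahan n c s i j = 0 := by
  simp [kahan, h.ne', h.not_gt]

theorem kahan_submatrix_castSucc_castSucc (n : ℕ) :
    (kahan (n + 1) c s).submatrix Fin.castSucc Fin.castSucc = kahan n c s := by
  ext i j
  simp [kahan]

theorem det_kahan (n : ℕ) : (kahan n c s).det = ∏ i : Fin n, c ^ (i : ℕ) := by
  rw [det_of_isUpperTriangular fun i j (hji : j < i) => kahan_apply_of_lt c s hji]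
  simp [kahan]

theorem kahan_submatrix_eq_diagonal_mul {ι κ : Type*} [Fintype ι] [DecidableEq ι] {n : ℕ}
    (r : ι → Fin n) (q : κ → Fin n) :
    (kahan n c s).submatrix r q =
      diagonal (fun i => c ^ (r i : ℕ)) * (kahan n 1 s).submatrix r q := by
  ext i j
  simp only [kahan, submatrix_apply, diagonal_mul, of_apply]
  split_ifs <;> ring

theorem kahan_one_submatrix_castSucc_succ_apply {m : ℕ} (i j : Fin (m + 1)) :
    (kahan (m + 2) 1 s).submatrix Fin.castSucc Fin.succ i j =
      if (i : ℕ) = j + 1 then 1 else if (i : ℕ) ≤ j then -s else 0 := by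
  simp only [kahan, submatrix_apply, of_apply, Fin.ext_iff, Fin.lt_def, Fin.val_castSucc,
    Fin.val_succ, one_pow, mul_one, Nat.lt_succ_iff]

theorem det_kahan_one_submatrix_castSucc_succ (m : ℕ) :
    ((kahan (m + 2) 1 s).submatrix Fin.castSucc Fin.succ).det =
      (-1) ^ (m + 1) * s * (1 + s) ^ m := by
  -- `E` is the inverse of the upper triangular all-ones matrix: multiplying by it on the right
  -- subtracts from each column its left neighbour, which turns the Hessenberg matrix into the
  -- lower bidiagonal matrix `L`.
  set E : Matrix (Fin (m + 1)) (Fin (m + 1)) ℝ :=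
    of fun k j => if (k : ℕ) = j then 1 else if (k : ℕ) + 1 = j then -1 else 0
  set L : Matrix (Fin (m + 1)) (Fin (m + 1)) ℝ :=
    of fun i j => if (i : ℕ) = j then (if (j : ℕ) = 0 then -s else -(1 + s))
      else if (i : ℕ) = j + 1 then 1 else 0
  have hE : E.det = 1 := by
    rw [det_of_isUpperTriangular fun i j (hji : j < i) => by
      rw [Fin.lt_def] at hji; simp only [E, of_apply]; rw [if_neg (by omega), if_neg (by omega)]]
    simp [E]
  have hL : L.det = (-1) ^ (m + 1) * s * (1 + s) ^ m := by
    rw [det_of_isLowerTriangular L fun i j (hij : i < j) => by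
      rw [Fin.lt_def] at hij; simp only [L, of_apply]; rw [if_neg (by omega), if_neg (by omega)],
      Fin.prod_univ_succ]
    simp only [L, of_apply, Fin.val_zero, Fin.val_succ, if_true, Nat.succ_ne_zero, if_false,
      Finset.prod_const, Finset.card_univ, Fintype.card_fin, neg_pow (1 + s)]
    ring
  have hHE : (kahan (m + 2) 1 s).submatrix Fin.castSucc Fin.succ * E = L := by
    ext i j
    rw [mul_apply]
    induction j using Fin.cases with
    | zero =>
      rw [Fintype.sum_eq_single 0 fun k hk => by
        rw [Ne, Fin.ext_iff] at hk
        simp only [E, of_apply]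
        rw [if_neg (by simpa using hk), if_neg (by simp), mul_zero]]
      simp only [E, L, of_apply, kahan_one_submatrix_castSucc_succ_apply, Fin.val_zero,
        zero_add, Nat.le_zero]
      split_ifs <;> first | ring1 | (exfalso; omega)
    | succ j =>
      rw [Fintype.sum_eq_add j.succ j.castSucc Fin.castSucc_lt_succ.ne' fun k hk => by
        simp only [Ne, Fin.ext_iff, Fin.val_succ, Fin.val_castSucc] at hk
        simp only [E, of_apply, Fin.val_succ]
        rw [if_neg (by omega), if_neg (by omega), mul_zero]]
      simp only [E, L, of_apply, kahan_one_submatrix_castSucc_succ_apply, Fin.val_succ,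
        Fin.val_castSucc]
      split_ifs <;> first | ring1 | (exfalso; omega)
  rw [← hL, ← hHE, det_mul, hE, mul_one]

theorem abs_det_kahan_submatrix_castSucc_succ (m : ℕ) (hs : 0 ≤ s) :
    |((kahan (m + 2) c s).submatrix Fin.castSucc Fin.succ).det| =
      s * (1 + s) ^ m * |(kahan (m + 1) c s).det| := by
  rw [kahan_submatrix_eq_diagonal_mul, det_mul, det_diagonal,
    det_kahan_one_submatrix_castSucc_succ, det_kahan]
  simp only [Fin.val_castSucc, abs_mul, abs_pow, abs_neg, abs_one, one_pow, abs_of_nonneg hs,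
    abs_of_nonneg (by positivity : (0 : ℝ) ≤ 1 + s)]
  ring

theorem vol_kahan_submatrix_id_castSucc (n : ℕ) :
    vol ((kahan (n + 1) c s).submatrix id Fin.castSucc) = |(kahan n c s).det| := by
  rw [← vol_submatrix_eq_of_forall_notMem_range _ (Fin.castSucc_injective n) ?_ le_rfl,
    submatrix_submatrix, Function.id_comp, Function.comp_id, kahan_submatrix_castSucc_castSucc,
    vol_eq_abs_det]
  intro i hi
  rw [Set.mem_range, Fin.exists_castSucc_eq, not_not] at hi
  subst hi
  exact funext fun j => kahan_apply_of_lt c s (Fin.castSucc_lt_last j)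

end Kahan

theorem diffOne_castSucc_succ (n : ℕ) :
    DiffOne (Fin.castSucc : Fin n → Fin (n + 1)) Fin.succ := by
  have hlast : ∀ a ∈ Finset.univ.image Fin.succ \ Finset.univ.image Fin.castSucc,
      a = Fin.last n := fun a ha => by
    by_contra h
    obtain ⟨i, hi⟩ := Fin.exists_castSucc_eq.2 h
    exact (Finset.mem_sdiff.1 ha).2 (Finset.mem_image.2 ⟨i, Finset.mem_univ i, hi⟩)
  exact ⟨Fin.succ_injective n,
    Finset.card_le_one.2 fun a ha b hb => (hlast a ha).trans (hlast b hb).symm⟩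

theorem statement_19_general (m : ℕ) (c s : ℝ) (hs : 0 < s) :
    (s * (1 + s) ^ m * vol ((kahan (m + 2) c s).submatrix id Fin.castSucc) ≤
      vol ((kahan (m + 2) c s).submatrix id Fin.succ)) ∧
    (s ^ 2 * (1 + s) ^ (2 * m) *
        vol (((kahan (m + 2) c s)ᵀ * kahan (m + 2) c s).submatrix
          Fin.castSucc Fin.castSucc) ≤
      vol (((kahan (m + 2) c s)ᵀ * kahan (m + 2) c s).submatrix Fin.succ Fin.succ)) ∧
    (∀ γ : ℝ, 1 ≤ γ → γ < s ^ 2 * (1 + s) ^ (2 * m) →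
      ¬ (0 < vol (((kahan (m + 2) c s)ᵀ * kahan (m + 2) c s).submatrix
            Fin.castSucc Fin.castSucc) ∧
        ∀ (r c' : Fin (m + 1) → Fin (m + 2)),
          DiffOne Fin.castSucc r → DiffOne Fin.castSucc c' →
          vol (((kahan (m + 2) c s)ᵀ * kahan (m + 2) c s).submatrix r c') ≤
            γ * vol (((kahan (m + 2) c s)ᵀ * kahan (m + 2) c s).submatrix
              Fin.castSucc Fin.castSucc))) := by
  set K := kahan (m + 2) c s
  have part1 : s * (1 + s) ^ m * vol (K.submatrix id Fin.castSucc) ≤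
      vol (K.submatrix id Fin.succ) := by
    rw [vol_kahan_submatrix_id_castSucc, ← abs_det_kahan_submatrix_castSucc_succ c s m hs.le,
      ← vol_eq_abs_det]
    exact vol_submatrix_le (K.submatrix id Fin.succ) (Fin.castSucc_injective _) le_rfl
  have hcard : Fintype.card (Fin (m + 1)) ≤ Fintype.card (Fin (m + 2)) := by simp
  have part2 : s ^ 2 * (1 + s) ^ (2 * m) * vol ((Kᵀ * K).submatrix Fin.castSucc Fin.castSucc) ≤
      vol ((Kᵀ * K).submatrix Fin.succ Fin.succ) := by
    rw [vol_transpose_mul_self_submatrix K _ hcard, vol_transpose_mul_self_submatrix K _ hcard,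
      pow_mul', ← mul_pow, ← mul_pow]
    exact pow_le_pow_left₀ (mul_nonneg (by positivity) (vol_nonneg _)) part1 2
  refine ⟨part1, part2, fun γ _ hγ ⟨hpos, hmax⟩ => ?_⟩
  have hneighbour := hmax Fin.succ Fin.succ (diffOne_castSucc_succ _) (diffOne_castSucc_succ _)
  linarith [mul_lt_mul_of_pos_right hγ hpos]

theorem statement_19 (m : ℕ) (c s : ℝ) (hc : 0 < c) (hs : 0 < s)
    (hcs : c ^ 2 + s ^ 2 = 1) :
    (s * (1 + s) ^ m * vol ((kahan (m + 2) c s).submatrix id Fin.castSucc) ≤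
      vol ((kahan (m + 2) c s).submatrix id Fin.succ)) ∧
    (s ^ 2 * (1 + s) ^ (2 * m) *
        vol (((kahan (m + 2) c s)ᵀ * kahan (m + 2) c s).submatrix
          Fin.castSucc Fin.castSucc) ≤
      vol (((kahan (m + 2) c s)ᵀ * kahan (m + 2) c s).submatrix Fin.succ Fin.succ)) ∧
    (∀ γ : ℝ, 1 ≤ γ → γ < s ^ 2 * (1 + s) ^ (2 * m) →
      ¬ (0 < vol (((kahan (m + 2) c s)ᵀ * kahan (m + 2) c s).submatrix
            Fin.castSucc Fin.castSucc) ∧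
        ∀ (r c' : Fin (m + 1) → Fin (m + 2)),
          DiffOne Fin.castSucc r → DiffOne Fin.castSucc c' →
          vol (((kahan (m + 2) c s)ᵀ * kahan (m + 2) c s).submatrix r c') ≤
            γ * vol (((kahan (m + 2) c s)ᵀ * kahan (m + 2) c s).submatrix
              Fin.castSucc Fin.castSucc))) :=
  statement_19_general m c s hs
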